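/- An ascent sequence contains the pattern 102 if and only if it contains the pattern 0102. In particular, the sets of ascent sequences of length n avoiding 102 and avoiding 0102 are equal. -/

import Mathlib

/-- Number of ascents (adjacent strict rises) in a list of naturals. -/
def ascList (l : List ℕ) : ℕ :=
  (l.zip l.tail).countP (fun p => decide (p.1 < p.2))

/-- `l` is an ascent sequence: nonempty, starts with 0, and each later letter is at most
one more than the number of ascents in the preceding prefix. -/
def IsAscSeq (l : List ℕ) : Prop :=
  l ≠ [] ∧ l.getD 0 0 = 0 ∧
    ∀ i, 0 < i → i < l.length → l.getD i 0 ≤ ascList (l.take i) + 1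

/-- A sequence contains the pattern 102. -/
def Contains102 (l : List ℕ) : Prop :=
  ∃ i j k, i < j ∧ j < k ∧ k < l.length ∧
    l.getD j 0 < l.getD i 0 ∧ l.getD i 0 < l.getD k 0

/-- A sequence contains the pattern 0102. -/
def Contains0102 (l : List ℕ) : Prop :=
  ∃ i j k m, i < j ∧ j < k ∧ k < m ∧ m < l.length ∧
    l.getD i 0 = l.getD k 0 ∧ l.getD i 0 < l.getD j 0 ∧ l.getD j 0 < l.getD m 0


/-!
Only the implication 102 ⇒ 0102 needs proof. Take an occurrence `a b c` of 102 and let `q` be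
the first position carrying a value larger than `b`. If `b` occurs before `q`, that copy together
with `a b c` is an occurrence of 0102. Otherwise every entry before `q` is smaller than `b`. A
weakly increasing prefix starting at `0` with entries below `b` has fewer than `b` ascents, so the
ascent condition at `q` would give a value at most `b`; hence the prefix has a descent, and
together with the entry at `q` it forms an occurrence of 102 with a smaller middle value. Strong
induction on the middle value concludes.
-/

@[simp]
lemma ascList_cons_cons (x y : ℕ) (l : List ℕ) :
    ascList (x :: y :: l) = ascList (y :: l) + if x < y then 1 else 0 := by
  simp [ascList, List.countP_cons]

lemma getD_zero_add_ascList_take_le {l : List ℕ} {q : ℕ}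
    (hmono : ∀ t < q, l.getD t 0 ≤ l.getD (t + 1) 0) :
    l.getD 0 0 + ascList (l.take (q + 1)) ≤ l.getD q 0 := by
  induction l generalizing q with
  | nil => simp [ascList]
  | cons x l ih =>
    rcases q with _ | q
    · simp [ascList]
    rcases l with _ | ⟨y, l⟩
    · simpa [ascList] using hmono 0 (by omega)
    have hxy : x ≤ y := by simpa using hmono 0 (by omega)
    have := ih (q := q) fun t ht => by simpa using hmono (t + 1) (by omega)
    simp only [List.take_succ_cons, ascList_cons_cons, List.getD_cons_succ,
      List.getD_cons_zero] at this ⊢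
    split <;> omega

lemma IsAscSeq.exists_descent_of_lt_getD {l : List ℕ} (hl : IsAscSeq l) {q v : ℕ}
    (hq : q < l.length) (hbelow : ∀ p < q, l.getD p 0 < v) (hv : v < l.getD q 0) :
    ∃ t, t + 1 < q ∧ l.getD (t + 1) 0 < l.getD t 0 := by
  obtain ⟨-, hzero, hasc⟩ := hl
  obtain _ | ⟨r⟩ := q
  · omega
  by_contra! hmono
  have hprefix := getD_zero_add_ascList_take_le (q := r) fun t ht => hmono t (by omega)
  have hascent := hasc (r + 1) (by omega) hq
  have hlast := hbelow r (by omega)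
  omega

theorem IsAscSeq.contains0102_of_contains102 {l : List ℕ} (hl : IsAscSeq l)
    (h : Contains102 l) : Contains0102 l := by
  obtain ⟨i, j, k, hij, hjk, hk, hji, hik⟩ := h
  induction hv : l.getD j 0 using Nat.strong_induction_on generalizing i j k with
  | _ v ih =>
  have hex : ∃ q, v < l.getD q 0 := ⟨i, hv ▸ hji⟩
  have hqi : Nat.find hex ≤ i := Nat.find_min' hex (hv ▸ hji)
  by_cases hcopy : ∃ p < Nat.find hex, l.getD p 0 = v
  · obtain ⟨p, hpq, hp⟩ := hcopy
    exact ⟨p, i, j, k, by omega, hij, hjk, hk, by rw [hp, hv], by omega, hik⟩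
  · have hbelow : ∀ p < Nat.find hex, l.getD p 0 < v := fun p hp =>
      lt_of_le_of_ne (not_lt.1 (Nat.find_min hex hp)) fun h => hcopy ⟨p, hp, h⟩
    obtain ⟨t, ht, hdesc⟩ := hl.exists_descent_of_lt_getD (by omega) hbelow (Nat.find_spec hex)
    have htv : l.getD t 0 < v := hbelow t (by omega)
    exact ih _ (by omega) t (t + 1) _ (by omega) ht (by omega) hdesc (htv.trans (Nat.find_spec hex)) rfl

theorem Contains0102.contains102 {l : List ℕ} (h : Contains0102 l) : Contains102 l := by
  obtain ⟨i, j, k, m, -, hjk, hkm, hm, hik, hij, hjm⟩ := h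
  exact ⟨j, k, m, hjk, hkm, hm, hik ▸ hij, hjm⟩

theorem IsAscSeq.contains102_iff_contains0102 {l : List ℕ} (hl : IsAscSeq l) :
    Contains102 l ↔ Contains0102 l :=
  ⟨hl.contains0102_of_contains102, Contains0102.contains102⟩

/-- An ascent sequence contains 102 iff it contains 0102; hence the avoidance sets of
102 and 0102 coincide for each length. -/
theorem stmt17 :
    (∀ l : List ℕ, IsAscSeq l → (Contains102 l ↔ Contains0102 l)) ∧
    ∀ n : ℕ,
      {l : List ℕ | l.length = n ∧ IsAscSeq l ∧ ¬ Contains102 l} =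
      {l : List ℕ | l.length = n ∧ IsAscSeq l ∧ ¬ Contains0102 l} := by
  refine ⟨fun l hl => hl.contains102_iff_contains0102, fun n => Set.ext fun l => ?_⟩
  exact and_congr_right fun _ =>
    and_congr_right fun hl => not_congr hl.contains102_iff_contains0102
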